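/- arXiv:1212.4129 — 3 statements merged into one kernel-verified Lean document; each statement's English description precedes it below -/
import Mathlib

section
/- For any undirected graphs G and H: dim((G·H) ×_e K⃗_2) ≤ dim(G ×_e K⃗_2) + χ(G)·dim(H ×_e K⃗_2), where · is the lexicographic product. -/
/-!
The indicator functions of principal down-sets realize any height-two poset, so each
`A ×_e K⃗₂` has a realizer `φ_A` in dimension `posetDim`. Fix a proper colouring `c` of `G`
and reals `lo < φ_H < hi`. Send `((u, a), s)` to `φ_G (u, s)` followed by one block of
`H`-coordinates per colour: block `c u` carries `φ_H (a, s)`, every other block the constant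
`lo` if `s` is minimal and `hi` if `s` is maximal. Two vertices that share a block are either
equal in `G` or non-adjacent (same colour), so the block compares `H`-coordinates exactly when
the lexicographic product does; when the colours differ, the two foreign blocks force any
comparable pair to run from a minimal to a maximal element.
-/

open SimpleGraph

def tensor {α β : Type*} (G : SimpleGraph α) (H : SimpleGraph β) :
    SimpleGraph (α × β) where
  Adj p q := G.Adj p.1 q.1 ∧ H.Adj p.2 q.2
  symm := ⟨fun p q h => ⟨h.1.symm, h.2.symm⟩⟩
  loopless := ⟨fun p h => G.loopless.irrefl p.1 h.1⟩

def etensor {α β : Type*} (G : SimpleGraph α) (H : SimpleGraph β) :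
    SimpleGraph (α × β) where
  Adj p q := (G.Adj p.1 q.1 ∨ p.1 = q.1) ∧ H.Adj p.2 q.2
  symm := ⟨fun p q h => ⟨h.1.imp (fun h' => h'.symm) (fun h' => h'.symm), h.2.symm⟩⟩
  loopless := ⟨fun p h => H.loopless.irrefl p.2 h.2⟩

def disj {α β : Type*} (G : SimpleGraph α) (H : SimpleGraph β) :
    SimpleGraph (α × β) where
  Adj p q := G.Adj p.1 q.1 ∨ H.Adj p.2 q.2
  symm := ⟨fun p q h => h.imp (fun h' => h'.symm) (fun h' => h'.symm)⟩
  loopless := ⟨fun p h => h.elim (G.loopless.irrefl p.1) (H.loopless.irrefl p.2)⟩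

def lexProd {α β : Type*} (G : SimpleGraph α) (H : SimpleGraph β) :
    SimpleGraph (α × β) where
  Adj p q := G.Adj p.1 q.1 ∨ (p.1 = q.1 ∧ H.Adj p.2 q.2)
  symm := ⟨fun p q h => h.imp (fun h' => h'.symm) (fun h' => ⟨h'.1.symm, h'.2.symm⟩)⟩
  loopless := ⟨fun p h => h.elim (G.loopless.irrefl p.1) (fun h' => H.loopless.irrefl p.2 h'.2)⟩

def disjPow {α : Type*} (G : SimpleGraph α) (k : ℕ) : SimpleGraph (Fin k → α) where
  Adj x y := ∃ i, G.Adj (x i) (y i)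
  symm := ⟨fun x y h => h.imp (fun i hi => hi.symm)⟩
  loopless := ⟨fun x h => h.elim (fun i hi => G.loopless.irrefl (x i) hi)⟩

def lexPow {α : Type*} (G : SimpleGraph α) (k : ℕ) : SimpleGraph (Fin k → α) where
  Adj x y := ∃ i, G.Adj (x i) (y i) ∧ ∀ j, j < i → x j = y j
  symm := ⟨fun x y h => h.imp (fun i hi => ⟨hi.1.symm, fun j hj => (hi.2 j hj).symm⟩)⟩
  loopless := ⟨fun x h => h.elim (fun i hi => G.loopless.irrefl (x i) hi.1)⟩

def IsIndMatching {V : Type*} (G : SimpleGraph V) {n : ℕ} (a b : Fin n → V) : Prop :=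
  (∀ i, G.Adj (a i) (b i)) ∧
  ∀ i j, i ≠ j → ¬ G.Adj (a i) (a j) ∧ ¬ G.Adj (a i) (b j) ∧ ¬ G.Adj (b i) (b j)

noncomputable def imNum {V : Type*} (G : SimpleGraph V) : ℕ :=
  sSup {n | ∃ a b : Fin n → V, IsIndMatching G a b}

def SemiCond {V : Type*} (G : SimpleGraph V) (σ : V → ℕ) (u u' v v' : V) : Prop :=
  σ u < σ u' → σ u < σ v → σ v < σ v' → ¬ G.Adj u v ∧ ¬ G.Adj u v'

def IsSemiIndMatching {V : Type*} (G : SimpleGraph V) (σ : V → ℕ) {n : ℕ}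
    (a b : Fin n → V) : Prop :=
  (∀ i, G.Adj (a i) (b i)) ∧
  (∀ i j, i ≠ j → a i ≠ a j ∧ a i ≠ b j ∧ b i ≠ b j) ∧
  (∀ i j, i ≠ j →
    SemiCond G σ (a i) (b i) (a j) (b j) ∧ SemiCond G σ (a i) (b i) (b j) (a j) ∧
    SemiCond G σ (b i) (a i) (a j) (b j) ∧ SemiCond G σ (b i) (a i) (b j) (a j))

noncomputable def simNumOrd {V : Type*} (G : SimpleGraph V) (σ : V → ℕ) : ℕ :=
  sSup {n | ∃ a b : Fin n → V, IsSemiIndMatching G σ a b}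

noncomputable def simNum {V : Type*} (G : SimpleGraph V) : ℕ :=
  sSup {n | ∃ σ : V → ℕ, Function.Injective σ ∧
    ∃ a b : Fin n → V, IsSemiIndMatching G σ a b}

noncomputable def indepNum {V : Type*} (G : SimpleGraph V) : ℕ :=
  sSup {n | ∃ s : Finset V, s.card = n ∧ ∀ u ∈ s, ∀ v ∈ s, ¬ G.Adj u v}

noncomputable def chromNum {V : Type*} (G : SimpleGraph V) : ℕ :=
  sInf {n | G.Colorable n}

def vecLT {d : ℕ} (x y : Fin d → ℝ) : Prop := (∀ i, x i ≤ y i) ∧ ∃ i, x i < y i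

def Realizes {V : Type*} (R : V → V → Prop) {d : ℕ} (φ : V → Fin d → ℝ) : Prop :=
  ∀ u v, u ≠ v → (R u v ↔ vecLT (φ u) (φ v))

noncomputable def posetDim {V : Type*} (R : V → V → Prop) : ℕ :=
  sInf {d | ∃ φ : V → Fin d → ℝ, Realizes R φ}

def IsHeightTwoPoset {V : Type*} (R : V → V → Prop) : Prop :=
  (∀ u, ¬ Relation.TransGen R u u) ∧
  (∀ u v w, R u v → R v w → R u w) ∧
  (∀ u, (∀ v, ¬ R v u) ∨ (∀ v, ¬ R u v))

def etensorRel {α β : Type*} (G : SimpleGraph α) (R : β → β → Prop) :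
    α × β → α × β → Prop :=
  fun p q => (G.Adj p.1 q.1 ∨ p.1 = q.1) ∧ R p.2 q.2

def tensorRel {α β : Type*} (G : SimpleGraph α) (R : β → β → Prop) :
    α × β → α × β → Prop :=
  fun p q => G.Adj p.1 q.1 ∧ R p.2 q.2

def K2dir : Fin 2 → Fin 2 → Prop := fun i j => i = 0 ∧ j = 1

def IsRealizer {V ι : Type*} (R : V → V → Prop) (φ : V → ι → ℝ) : Prop :=
  ∀ u v, u ≠ v → (R u v ↔ φ u < φ v)

theorem realizes_iff_isRealizer {V : Type*} {R : V → V → Prop} {d : ℕ} {φ : V → Fin d → ℝ} :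
    Realizes R φ ↔ IsRealizer R φ := by
  simp only [Realizes, IsRealizer, vecLT, Pi.lt_def, Pi.le_def]

theorem comp_equiv_lt_comp_equiv_iff {ι ι' : Type*} (e : ι' ≃ ι) {x y : ι → ℝ} :
    x ∘ e < y ∘ e ↔ x < y := by
  have hle {x y : ι → ℝ} : x ∘ e ≤ y ∘ e ↔ x ≤ y :=
    (e.surjective.forall (p := fun i => x i ≤ y i)).symm
  simp only [lt_iff_le_not_ge, hle]

theorem IsRealizer.comp_equiv {V ι ι' : Type*} {R : V → V → Prop} {φ : V → ι → ℝ}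
    (hφ : IsRealizer R φ) (e : ι' ≃ ι) : IsRealizer R fun v => φ v ∘ e :=
  fun u v huv => (hφ u v huv).trans (comp_equiv_lt_comp_equiv_iff e).symm

theorem IsRealizer.posetDim_le_card {V ι : Type*} [Fintype ι] {R : V → V → Prop}
    {φ : V → ι → ℝ} (hφ : IsRealizer R φ) : posetDim R ≤ Fintype.card ι :=
  Nat.sInf_le ⟨_, realizes_iff_isRealizer.2 (hφ.comp_equiv (Fintype.equivFin ι).symm)⟩

theorem IsRealizer.exists_fin_posetDim {V ι : Type*} [Fintype ι] {R : V → V → Prop}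
    {φ : V → ι → ℝ} (hφ : IsRealizer R φ) :
    ∃ ψ : V → Fin (posetDim R) → ℝ, IsRealizer R ψ := by
  obtain ⟨ψ, hψ⟩ : posetDim R ∈ {d | ∃ ψ : V → Fin d → ℝ, Realizes R ψ} :=
    Nat.sInf_mem ⟨_, _, realizes_iff_isRealizer.2 (hφ.comp_equiv (Fintype.equivFin ι).symm)⟩
  exact ⟨ψ, realizes_iff_isRealizer.1 hψ⟩

theorem exists_isRealizer_of_trans_of_asymm {V : Type*} {R : V → V → Prop}
    (htrans : ∀ u v w, R u v → R v w → R u w) (hasymm : ∀ u v, R u v → ¬ R v u) :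
    ∃ φ : V → V → ℝ, IsRealizer R φ := by
  classical
  refine ⟨fun v w => if w = v ∨ R w v then 1 else 0, fun u v huv => ⟨fun h => ?_, fun h => ?_⟩⟩
  · refine Pi.lt_def.2 ⟨fun w => ?_, v, ?_⟩
    · have : w = u ∨ R w u → w = v ∨ R w v := by
        rintro (rfl | hwu)
        exacts [Or.inr h, Or.inr (htrans _ _ _ hwu h)]
      dsimp only
      split_ifs <;> simp_all
    · have : ¬ (v = u ∨ R v u) := by
        rintro (rfl | hvu)
        exacts [huv rfl, hasymm _ _ h hvu]
      simp [this]
  · have hu := h.le u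
    simp only [true_or, if_true] at hu
    split_ifs at hu with huv'
    · exact huv'.resolve_left huv
    · norm_num at hu

theorem etensorRel_K2dir_not_rel_of_rel {γ : Type*} {A : SimpleGraph γ} {x y z : γ × Fin 2}
    (hxy : etensorRel A K2dir x y) : ¬ etensorRel A K2dir y z := fun hyz => by
  simpa [hxy.2.2] using hyz.2.1

theorem exists_isRealizer_fin_posetDim_etensorRel {γ : Type*} [Fintype γ] (A : SimpleGraph γ) :
    ∃ φ : γ × Fin 2 → Fin (posetDim (etensorRel A K2dir)) → ℝ,
      IsRealizer (etensorRel A K2dir) φ := by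
  obtain ⟨φ, hφ⟩ := exists_isRealizer_of_trans_of_asymm (R := etensorRel A K2dir)
    (fun _ _ _ hxy hyz => (etensorRel_K2dir_not_rel_of_rel hxy hyz).elim)
    (fun _ _ hxy hyx => etensorRel_K2dir_not_rel_of_rel hxy hyx)
  exact hφ.exists_fin_posetDim

namespace IsRealizer

variable {γ ι : Type*} {A : SimpleGraph γ} {φ : γ × Fin 2 → ι → ℝ}

theorem k2dir_of_lt (hφ : IsRealizer (etensorRel A K2dir) φ) {u v : γ} {s t : Fin 2}
    (h : φ (u, s) < φ (v, t)) : K2dir s t :=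
  ((hφ _ _ fun heq => h.ne (congrArg φ heq)).2 h).2

theorem lt_iff (hφ : IsRealizer (etensorRel A K2dir) φ) {u v : γ} :
    φ (u, 0) < φ (v, 1) ↔ A.Adj u v ∨ u = v :=
  (hφ _ _ (by simp)).symm.trans (by simp [etensorRel, K2dir])

theorem le_iff (hφ : IsRealizer (etensorRel A K2dir) φ) {u v : γ} :
    φ (u, 0) ≤ φ (v, 1) ↔ A.Adj u v ∨ u = v := by
  refine ⟨fun h => hφ.lt_iff.1 (h.lt_of_ne fun heq => ?_), fun h => (hφ.lt_iff.2 h).le⟩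
  have : φ (v, 1) < φ (u, 1) := heq ▸ hφ.lt_iff.2 (Or.inr rfl)
  exact absurd (hφ.k2dir_of_lt this).1 (by decide)

theorem nonempty_index (hφ : IsRealizer (etensorRel A K2dir) φ) (u : γ) : Nonempty ι :=
  let ⟨_, i, _⟩ := Pi.lt_def.1 (hφ.lt_iff.2 (Or.inr rfl : A.Adj u u ∨ u = u))
  ⟨i⟩

end IsRealizer

section LexRealizer

variable {α β γ ι κ : Type*}

def lexRealizer [DecidableEq γ] (φG : α × Fin 2 → ι → ℝ) (φH : β × Fin 2 → κ → ℝ) (c : α → γ)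
    (lo hi : ℝ) : (α × β) × Fin 2 → ι ⊕ γ × κ → ℝ
  | ((u, a), s) => Sum.elim (φG (u, s)) fun (r, j) => if c u = r then φH (a, s) j else ![lo, hi] s

variable [DecidableEq γ] {G : SimpleGraph α} {H : SimpleGraph β} {φG : α × Fin 2 → ι → ℝ}
  {φH : β × Fin 2 → κ → ℝ} {lo hi : ℝ}

theorem lexRealizer_lt_of_rel (hG : IsRealizer (etensorRel G K2dir) φG)
    (hH : IsRealizer (etensorRel H K2dir) φH) (hlo : ∀ x j, lo < φH x j) (hhi : ∀ x j, φH x j < hi)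
    (c : G.Coloring γ) {p q : (α × β) × Fin 2} (hpq : etensorRel (lexProd G H) K2dir p q) :
    lexRealizer φG φH c lo hi p < lexRealizer φG φH c lo hi q := by
  obtain ⟨⟨u, a⟩, s⟩ := p
  obtain ⟨⟨v, b⟩, t⟩ := q
  obtain ⟨hadj, rfl, rfl⟩ := hpq
  have hGlt : φG (u, 0) < φG (v, 1) := hG.lt_iff.2 <| by
    rcases hadj with (h | ⟨rfl, -⟩) | h
    exacts [.inl h, .inr rfl, .inr (congrArg Prod.fst h)]
  have hHle (hc : c u = c v) : φH (a, 0) ≤ φH (b, 1) := hH.le_iff.2 <| by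
    rcases hadj with (h | ⟨-, h⟩) | h
    exacts [absurd hc (c.valid h), .inl h, .inr (congrArg Prod.snd h)]
  obtain ⟨-, i, hGi⟩ := Pi.lt_def.1 hGlt
  refine Pi.lt_def.2 ⟨Sum.elim_le_elim_iff.2 ⟨hGlt.le, fun ⟨r, j⟩ => ?_⟩, .inl i, hGi⟩
  dsimp only
  split_ifs with hu hv hv
  · exact hHle (hu.trans hv.symm) j
  · simpa using (hhi _ _).le
  · simpa using (hlo _ _).le
  · simpa using (hlo (a, 0) j).le.trans (hhi (a, 0) j).le

theorem lexRealizer_k2dir_of_lt (hG : IsRealizer (etensorRel G K2dir) φG)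
    (hH : IsRealizer (etensorRel H K2dir) φH) (hlo : ∀ x j, lo < φH x j) (hhi : ∀ x j, φH x j < hi)
    (c : α → γ) {u v : α} {a b : β} {s t : Fin 2}
    (h : lexRealizer φG φH c lo hi ((u, a), s) < lexRealizer φG φH c lo hi ((v, b), t)) :
    K2dir s t := by
  obtain ⟨hle, w, hw⟩ := Pi.lt_def.1 h
  obtain ⟨j⟩ := hH.nonempty_index a
  by_cases hc : c u = c v
  · rcases w with i | ⟨r, j'⟩
    · exact hG.k2dir_of_lt (Pi.lt_def.2 ⟨fun i => hle (.inl i), i, hw⟩)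
    by_cases hr : c u = r
    · refine hH.k2dir_of_lt (u := a) (v := b) (Pi.lt_def.2 ⟨fun j => ?_, j', ?_⟩)
      · simpa [lexRealizer, hr, ← hc] using hle (.inr (r, j))
      · simpa [lexRealizer, hr, ← hc] using hw
    · fin_cases s <;> fin_cases t <;> simp [lexRealizer, K2dir, hr, ← hc] at hw ⊢
      linarith [hlo (a, 0) j, hhi (a, 0) j]
  · have h1 := hle (.inr (c u, j))
    have h2 := hle (.inr (c v, j))
    fin_cases s <;> fin_cases t <;> simp [lexRealizer, K2dir, hc, Ne.symm hc] at h1 h2 ⊢ <;>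
      linarith [hlo (a, 0) j, hlo (a, 1) j, hhi (b, 0) j, hhi (b, 1) j]

theorem lexRealizer_rel_of_le (hG : IsRealizer (etensorRel G K2dir) φG)
    (hH : IsRealizer (etensorRel H K2dir) φH) (c : α → γ) {u v : α} {a b : β}
    (h : lexRealizer φG φH c lo hi ((u, a), 0) ≤ lexRealizer φG φH c lo hi ((v, b), 1)) :
    etensorRel (lexProd G H) K2dir ((u, a), 0) ((v, b), 1) := by
  refine ⟨?_, rfl, rfl⟩
  rcases hG.le_iff.1 fun i => h (.inl i) with huv | rfl
  · exact .inl (.inl huv)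
  rcases hH.le_iff.1 fun j => by simpa [lexRealizer] using h (.inr (c u, j)) with hab | rfl
  · exact .inl (.inr ⟨rfl, hab⟩)
  · exact .inr rfl

theorem isRealizer_lexRealizer (hG : IsRealizer (etensorRel G K2dir) φG)
    (hH : IsRealizer (etensorRel H K2dir) φH) (hlo : ∀ x j, lo < φH x j) (hhi : ∀ x j, φH x j < hi)
    (c : G.Coloring γ) :
    IsRealizer (etensorRel (lexProd G H) K2dir) (lexRealizer φG φH c lo hi) := by
  rintro ⟨⟨u, a⟩, s⟩ ⟨⟨v, b⟩, t⟩ -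
  refine ⟨lexRealizer_lt_of_rel hG hH hlo hhi c, fun h => ?_⟩
  obtain ⟨rfl, rfl⟩ := lexRealizer_k2dir_of_lt hG hH hlo hhi c h
  exact lexRealizer_rel_of_le hG hH c h.le

end LexRealizer

theorem stmt14 {α β : Type*} [Fintype α] [Fintype β] (G : SimpleGraph α) (H : SimpleGraph β) :
    posetDim (etensorRel (lexProd G H) K2dir) ≤
      posetDim (etensorRel G K2dir) + chromNum G * posetDim (etensorRel H K2dir) := by
  obtain ⟨φG, hG⟩ := exists_isRealizer_fin_posetDim_etensorRel G
  obtain ⟨φH, hH⟩ := exists_isRealizer_fin_posetDim_etensorRel H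
  obtain ⟨lo, hlo⟩ := Finite.exists_ge fun xj : (β × Fin 2) × Fin _ => φH xj.1 xj.2
  obtain ⟨hi, hhi⟩ := Finite.exists_le fun xj : (β × Fin 2) × Fin _ => φH xj.1 xj.2
  have hcol : G.Colorable (chromNum G) :=
    Nat.sInf_mem (s := {n | G.Colorable n}) ⟨_, G.colorable_of_fintype⟩
  have hψ := isRealizer_lexRealizer hG hH (lo := lo - 1) (hi := hi + 1)
    (fun x j => (sub_one_lt lo).trans_le (hlo (x, j)))
    (fun x j => (hhi (x, j)).trans_lt (lt_add_one hi)) hcol.some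
  simpa using hψ.posetDim_le_card
end

section
/- For any graph G and integer k ≥ 1, letting G^k be the k-fold disjunctive power, im(G^k × K_2) ≤ k · im(G × K_2), and consequently α(G)^k ≤ im(G^k ×_e K_2) ≤ k·im(G × K_2) + α(G)^k. -/
open SimpleGraph

noncomputable def indepNum' {V : Type*} (G : SimpleGraph V) : ℕ :=
  sSup {n | ∃ s : Finset V, s.card = n ∧ ∀ u ∈ s, ∀ v ∈ s, ¬ G.Adj u v}

/-!
Each edge of an induced matching in `G^k × K₂` is an edge of `G` in at least one coordinate;
grouping the edges by such a coordinate and projecting onto it yields `k` induced matchings of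
`G × K₂`. In `H ×_e K₂` the matching edges that are not edges of `H × K₂` join the two copies of
one vertex, and those vertices form an independent set of `H`; conversely any independent set
gives such a matching. Together with `α(G^k) = α(G)^k` this gives the bounds on `im(G^k ×_e K₂)`.
-/

open Finset

section InducedMatching

variable {V W : Type*} {G : SimpleGraph V} {H : SimpleGraph W} {n : ℕ} {a b : Fin n → V}

lemma IsIndMatching.injective_left (h : IsIndMatching G a b) : Function.Injective a := by
  intro i j hij
  by_contra hne
  exact (h.2 i j hne).2.1 (hij ▸ h.1 j)

lemma imNum_bddAbove [Finite V] (G : SimpleGraph V) :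
    BddAbove {n | ∃ a b : Fin n → V, IsIndMatching G a b} := by
  have := Fintype.ofFinite V
  refine ⟨Fintype.card V, ?_⟩
  rintro m ⟨a, b, h⟩
  simpa using Fintype.card_le_of_injective a h.injective_left

lemma IsIndMatching.le_imNum [Finite V] (h : IsIndMatching G a b) : n ≤ imNum G :=
  le_csSup (imNum_bddAbove G) ⟨a, b, h⟩

lemma imNum_le {m : ℕ} (h : ∀ n (a b : Fin n → V), IsIndMatching G a b → n ≤ m) :
    imNum G ≤ m :=
  csSup_le' fun _ ⟨a, b, hab⟩ => h _ a b hab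

lemma IsIndMatching.map (h : IsIndMatching G a b) {f : V → W}
    (hf : ∀ u v, H.Adj (f u) (f v) → G.Adj u v) {m : ℕ} (e : Fin m ↪ Fin n)
    (he : ∀ i, H.Adj (f (a (e i))) (f (b (e i)))) :
    IsIndMatching H (f ∘ a ∘ e) (f ∘ b ∘ e) :=
  ⟨he, fun i j hij => (h.2 (e i) (e j) (e.injective.ne hij)).imp (mt (hf _ _))
    (And.imp (mt (hf _ _)) (mt (hf _ _)))⟩

lemma IsIndMatching.card_le_imNum_of_map [Finite W] (h : IsIndMatching G a b) {f : V → W}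
    (hf : ∀ u v, H.Adj (f u) (f v) → G.Adj u v)
    (s : Finset (Fin n)) (hs : ∀ i ∈ s, H.Adj (f (a i)) (f (b i))) :
    s.card ≤ imNum H :=
  (h.map hf (s.orderEmbOfFin rfl).toEmbedding
    fun j => hs _ (s.orderEmbOfFin_mem rfl j)).le_imNum

end InducedMatching

section IndependenceNumber

variable {V : Type*} {G : SimpleGraph V}

lemma indepNum'_bddAbove [Finite V] (G : SimpleGraph V) :
    BddAbove {n | ∃ s : Finset V, s.card = n ∧ ∀ u ∈ s, ∀ v ∈ s, ¬ G.Adj u v} := by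
  have := Fintype.ofFinite V
  refine ⟨Fintype.card V, ?_⟩
  rintro m ⟨t, rfl, -⟩
  exact card_le_univ t

lemma card_le_indepNum' [Finite V] {s : Finset V} (h : ∀ u ∈ s, ∀ v ∈ s, ¬ G.Adj u v) :
    s.card ≤ indepNum' G :=
  le_csSup (indepNum'_bddAbove G) ⟨s, rfl, h⟩

lemma indepNum'_le {m : ℕ}
    (h : ∀ s : Finset V, (∀ u ∈ s, ∀ v ∈ s, ¬ G.Adj u v) → s.card ≤ m) :
    indepNum' G ≤ m :=
  csSup_le' fun _ ⟨s, hs, hind⟩ => hs ▸ h s hind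

lemma exists_card_eq_indepNum' [Finite V] (G : SimpleGraph V) :
    ∃ s : Finset V, s.card = indepNum' G ∧ ∀ u ∈ s, ∀ v ∈ s, ¬ G.Adj u v :=
  Nat.sSup_mem (s := {n | ∃ s : Finset V, s.card = n ∧ ∀ u ∈ s, ∀ v ∈ s, ¬ G.Adj u v})
    ⟨0, ∅, rfl, by simp⟩ (indepNum'_bddAbove G)

end IndependenceNumber

theorem indepNum'_disjPow {V : Type*} [Finite V] (G : SimpleGraph V) (k : ℕ) :
    indepNum' (disjPow G k) = indepNum' G ^ k := by
  classical
  have := Fintype.ofFinite V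
  apply le_antisymm
  · refine indepNum'_le fun S hS => ?_
    have hproj : ∀ c, ∀ u ∈ S.image (· c), ∀ v ∈ S.image (· c), ¬ G.Adj u v := by
      simp only [mem_image]
      rintro c _ ⟨x, hx, rfl⟩ _ ⟨y, hy, rfl⟩ hxy
      exact hS x hx y hy ⟨c, hxy⟩
    calc S.card ≤ (Fintype.piFinset fun c => S.image (· c)).card :=
          card_le_card fun x hx => Fintype.mem_piFinset.2 fun c => mem_image_of_mem _ hx
      _ = ∏ c, (S.image (· c)).card := Fintype.card_piFinset _
      _ ≤ indepNum' G ^ k := by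
          simpa using prod_le_pow_card univ _ _ fun c _ => card_le_indepNum' (hproj c)
  · obtain ⟨s, hcard, hs⟩ := exists_card_eq_indepNum' G
    rw [← hcard, ← Fintype.card_piFinset_const s k]
    refine card_le_indepNum' fun x hx y hy ⟨c, hxy⟩ => ?_
    exact hs _ (Fintype.mem_piFinset.1 hx c) _ (Fintype.mem_piFinset.1 hy c) hxy

theorem imNum_tensor_disjPow_le {V β : Type*} [Finite V] [Finite β] (G : SimpleGraph V)
    (H : SimpleGraph β) (k : ℕ) :
    imNum (tensor (disjPow G k) H) ≤ k * imNum (tensor G H) := by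
  classical
  refine imNum_le fun n a b h => ?_
  choose c hc using fun i => (h.1 i).1
  have hfiber : ∀ j, (univ.filter (c · = j)).card ≤ imNum (tensor G H) := fun j =>
    h.card_le_imNum_of_map (H := tensor G H) (f := fun p => (p.1 j, p.2))
      (fun _ _ hpq => ⟨⟨j, hpq.1⟩, hpq.2⟩) _ fun i hi => ⟨(mem_filter.1 hi).2 ▸ hc i, (h.1 i).2⟩
  calc n = ∑ j, (univ.filter (c · = j)).card := by
        simpa using card_eq_sum_card_fiberwise (s := univ) (t := univ) (f := c) (by simp)
    _ ≤ ∑ _j : Fin k, imNum (tensor G H) := sum_le_sum fun j _ => hfiber j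
    _ = k * imNum (tensor G H) := by simp

lemma IsIndMatching.not_adj_or_eq_of_etensor_top {W β : Type*} {H : SimpleGraph W} {n : ℕ}
    {a b : Fin n → W × β} (h : IsIndMatching (etensor H ⊤) a b) {i j : Fin n} (hij : i ≠ j)
    (hj : (b j).1 = (a j).1) :
    ¬ (H.Adj (a i).1 (a j).1 ∨ (a i).1 = (a j).1) := by
  intro hadj
  obtain ⟨haa, hab, -⟩ := h.2 i j hij
  -- `a j` and `b j` lie in different layers, so `a i` lies in a layer other than one of them.
  by_cases hlayer : (a i).2 = (a j).2
  · exact hab ⟨by rwa [hj], by rw [hlayer]; exact (h.1 j).2⟩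
  · exact haa ⟨hadj, hlayer⟩

theorem imNum_etensor_top_le {W β : Type*} [Finite W] [Finite β] (H : SimpleGraph W) :
    imNum (etensor H (⊤ : SimpleGraph β)) ≤
      imNum (tensor H (⊤ : SimpleGraph β)) + indepNum' H := by
  classical
  refine imNum_le fun n a b h => ?_
  set s := univ.filter fun i => H.Adj (a i).1 (b i).1
  have hs : s.card ≤ imNum (tensor H ⊤) :=
    h.card_le_imNum_of_map (H := tensor H ⊤) (f := id) (fun _ _ hpq => ⟨Or.inl hpq.1, hpq.2⟩) s
      fun i hi => ⟨(mem_filter.1 hi).2, (h.1 i).2⟩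
  have hloop : ∀ i ∈ sᶜ, (b i).1 = (a i).1 := fun i hi =>
    ((h.1 i).1.resolve_left (by simpa [s] using hi)).symm
  have hinj : Set.InjOn (fun i => (a i).1) ↑(sᶜ) := fun i _ j hj hij => by
    by_contra hne
    exact h.not_adj_or_eq_of_etensor_top hne (hloop j hj) (Or.inr hij)
  have hind : ∀ u ∈ sᶜ.image (fun i => (a i).1), ∀ v ∈ sᶜ.image (fun i => (a i).1),
      ¬ H.Adj u v := by
    simp only [mem_image]
    rintro _ ⟨i, -, rfl⟩ _ ⟨j, hj, rfl⟩ hadj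
    obtain rfl | hne := eq_or_ne i j
    · exact H.loopless.irrefl _ hadj
    · exact h.not_adj_or_eq_of_etensor_top hne (hloop j hj) (Or.inl hadj)
  have hsc : sᶜ.card ≤ indepNum' H :=
    (card_image_of_injOn hinj).symm.trans_le (card_le_indepNum' hind)
  have := card_add_card_compl s
  simp only [Fintype.card_fin] at this
  omega

theorem indepNum'_le_imNum_etensor {V : Type*} [Finite V] (H : SimpleGraph V) :
    indepNum' H ≤ imNum (etensor H (⊤ : SimpleGraph (Fin 2))) := by
  obtain ⟨s, hcard, hs⟩ := exists_card_eq_indepNum' H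
  let e : Fin s.card → V := fun j => s.equivFin.symm j
  have he : Function.Injective e := Subtype.val_injective.comp s.equivFin.symm.injective
  have hmatch :
      IsIndMatching (etensor H ⊤) (fun j => (e j, (0 : Fin 2))) (fun j => (e j, 1)) := by
    refine ⟨fun j => ⟨Or.inr rfl, by simp⟩, fun i j hij => ⟨fun hadj => hadj.2.ne rfl, ?_,
      fun hadj => hadj.2.ne rfl⟩⟩
    rintro ⟨hadj | heq, -⟩
    · exact hs _ (s.equivFin.symm i).2 _ (s.equivFin.symm j).2 hadj
    · exact hij (he heq)
  exact hcard ▸ hmatch.le_imNum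

theorem stmt16_general {V : Type*} [Fintype V] (G : SimpleGraph V) (k : ℕ) :
    imNum (tensor (disjPow G k) (⊤ : SimpleGraph (Fin 2))) ≤
      k * imNum (tensor G (⊤ : SimpleGraph (Fin 2))) ∧
    indepNum' G ^ k ≤ imNum (etensor (disjPow G k) (⊤ : SimpleGraph (Fin 2))) ∧
    imNum (etensor (disjPow G k) (⊤ : SimpleGraph (Fin 2))) ≤
      k * imNum (tensor G (⊤ : SimpleGraph (Fin 2))) + indepNum' G ^ k := by
  have hsub := imNum_tensor_disjPow_le G (⊤ : SimpleGraph (Fin 2)) k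
  refine ⟨hsub, indepNum'_disjPow G k ▸ indepNum'_le_imNum_etensor _, ?_⟩
  calc imNum (etensor (disjPow G k) ⊤)
      ≤ imNum (tensor (disjPow G k) ⊤) + indepNum' (disjPow G k) := imNum_etensor_top_le _
    _ ≤ k * imNum (tensor G ⊤) + indepNum' G ^ k := by
        rw [indepNum'_disjPow]
        exact Nat.add_le_add_right hsub _

theorem stmt16 {V : Type*} [Fintype V] (G : SimpleGraph V) (k : ℕ) (hk : 1 ≤ k) :
    imNum (tensor (disjPow G k) (⊤ : SimpleGraph (Fin 2))) ≤
      k * imNum (tensor G (⊤ : SimpleGraph (Fin 2))) ∧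
    indepNum' G ^ k ≤ imNum (etensor (disjPow G k) (⊤ : SimpleGraph (Fin 2))) ∧
    imNum (etensor (disjPow G k) (⊤ : SimpleGraph (Fin 2))) ≤
      k * imNum (tensor G (⊤ : SimpleGraph (Fin 2))) + indepNum' G ^ k :=
  stmt16_general G k
end

section
/- Let L be any vertex set, X a graph, M an induced matching of K_L ×_e X, and define M_X ⊆ E(X) to be the set of projections xy of edges (i,x)(j,y) ∈ M. Then M_X is an induced matching of X of the same size as M (the projection is injective on M). -/
open SimpleGraph

theorem etensor_top_eq_comap {L V : Type*} (X : SimpleGraph V) :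
    etensor (⊤ : SimpleGraph L) X = X.comap Prod.snd := by
  ext p q
  simp only [etensor, top_adj, comap_adj, and_iff_right_iff_imp]
  exact fun _ => ne_or_eq p.1 q.1

theorem isIndMatching_comap_iff {W V : Type*} (G : SimpleGraph V) (f : W → V) {n : ℕ}
    (a b : Fin n → W) : IsIndMatching (G.comap f) a b ↔ IsIndMatching G (f ∘ a) (f ∘ b) :=
  Iff.rfl

theorem IsIndMatching.endpoints_ne {V : Type*} {G : SimpleGraph V} {n : ℕ} {a b : Fin n → V}
    (hM : IsIndMatching G a b) {i j : Fin n} (hij : i ≠ j) :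
    a i ≠ a j ∧ a i ≠ b j ∧ b i ≠ b j := by
  obtain ⟨hadj, hind⟩ := hM
  obtain ⟨hnaa, hnab, -⟩ := hind i j hij
  refine ⟨fun h => hnab (h ▸ hadj j), fun h => hnaa (h ▸ (hadj j).symm), fun h => ?_⟩
  exact (hind j i hij.symm).2.1 (h ▸ hadj j)

theorem stmt17 {L V : Type*} (X : SimpleGraph V) (n : ℕ) (a b : Fin n → L × V)
    (hM : IsIndMatching (etensor (⊤ : SimpleGraph L) X) a b) :
    IsIndMatching X (fun i => (a i).2) (fun i => (b i).2) ∧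
    (∀ i j, i ≠ j → (a i).2 ≠ (a j).2 ∧ (a i).2 ≠ (b j).2 ∧ (b i).2 ≠ (b j).2) := by
  rw [etensor_top_eq_comap, isIndMatching_comap_iff] at hM
  exact ⟨hM, fun _ _ hij => hM.endpoints_ne hij⟩
end
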